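/- Let D be an ℝ-linear operator on smooth vector-valued functions along an interval satisfying the Leibniz rule D(fV) = f′V + fDV, and suppose T, N, B satisfy the Frenet equations DT = k₁ε₂N, DN = −k₁ε₁T + k₂ε₃B, DB = −k₂ε₂N, where k₁, k₂ are smooth real functions and ε₁,ε₂,ε₃ ∈ {1,−1}. Then D³T = (−3k₁k₁′ε₁ε₂)T + (k₁″ε₂ − k₁³ε₁ − k₁k₂²ε₃)N + (2k₁′k₂ + k₁k₂′)ε₂ε₃ B. -/

import Mathlib

theorem frenet_third_derivative
    {E : Type*} [AddCommGroup E] [Module ℝ E]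
    (D : (ℝ → E) → (ℝ → E)) (hlin : IsLinearMap ℝ D)
    (hleib : ∀ f : ℝ → ℝ, ContDiff ℝ (⊤ : ℕ∞) f → ∀ V : ℝ → E,
      D (fun s => f s • V s) = fun s => deriv f s • V s + f s • D V s)
    (T N B : ℝ → E) (k₁ k₂ : ℝ → ℝ)
    (hk₁ : ContDiff ℝ (⊤ : ℕ∞) k₁) (hk₂ : ContDiff ℝ (⊤ : ℕ∞) k₂)
    (ε₁ ε₂ ε₃ : ℝ)
    (hε₁ : ε₁ = 1 ∨ ε₁ = -1) (hε₂ : ε₂ = 1 ∨ ε₂ = -1) (hε₃ : ε₃ = 1 ∨ ε₃ = -1)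
    (hT : D T = fun s => (k₁ s * ε₂) • N s)
    (hN : D N = fun s => (-(k₁ s * ε₁)) • T s + (k₂ s * ε₃) • B s)
    (hB : D B = fun s => (-(k₂ s * ε₂)) • N s) :
    D (D (D T)) = fun s =>
      (-3 * k₁ s * deriv k₁ s * ε₁ * ε₂) • T s
        + (deriv (deriv k₁) s * ε₂ - (k₁ s) ^ 3 * ε₁ - k₁ s * (k₂ s) ^ 2 * ε₃) • N s
        + ((2 * deriv k₁ s * k₂ s + k₁ s * deriv k₂ s) * ε₂ * ε₃) • B s := by
  have hk₁d : Differentiable ℝ k₁ := hk₁.differentiable (by simp)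
  have hk₂d : Differentiable ℝ k₂ := hk₂.differentiable (by simp)
  have hdk₁ : ContDiff ℝ (⊤ : ℕ∞) (deriv k₁) := by
    have h' : ContDiff ℝ (((⊤ : ℕ∞) : WithTop ℕ∞) + 1) k₁ := by exact hk₁
    exact (contDiff_succ_iff_deriv.mp h').2.2
  have hdk₁d : Differentiable ℝ (deriv k₁) := hdk₁.differentiable (by simp)
  have h2 : D (D T) = fun s =>
      (-(k₁ s ^ 2 * ε₁ * ε₂)) • T s + (deriv k₁ s * ε₂) • N s
        + (k₁ s * k₂ s * ε₂ * ε₃) • B s := by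
    rw [hT, hleib (fun s => k₁ s * ε₂) (hk₁.mul contDiff_const) N]
    funext s
    have hd : deriv (fun s => k₁ s * ε₂) s = deriv k₁ s * ε₂ :=
      ((hk₁d s).hasDerivAt.mul_const ε₂).deriv
    rw [hd, hN]
    module
  have hsplit : D (D T) = (fun s => (-(k₁ s ^ 2 * ε₁ * ε₂)) • T s)
      + (fun s => (deriv k₁ s * ε₂) • N s)
      + (fun s => (k₁ s * k₂ s * ε₂ * ε₃) • B s) := h2
  rw [hsplit, hlin.map_add, hlin.map_add,
    hleib _ ((((hk₁.pow 2).mul contDiff_const).mul contDiff_const).neg) T,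
    hleib _ (hdk₁.mul contDiff_const) N,
    hleib _ (((hk₁.mul hk₂).mul contDiff_const).mul contDiff_const) B]
  funext s
  have d1 : deriv (fun s => -(k₁ s ^ 2 * ε₁ * ε₂)) s
      = -(((2 : ℕ) * k₁ s ^ 1 * deriv k₁ s) * ε₁ * ε₂) :=
    (((((hk₁d s).hasDerivAt.pow 2).mul_const ε₁).mul_const ε₂).neg).deriv
  have d2 : deriv (fun s => deriv k₁ s * ε₂) s = deriv (deriv k₁) s * ε₂ :=
    ((hdk₁d s).hasDerivAt.mul_const ε₂).deriv
  have d3 : deriv (fun s => k₁ s * k₂ s * ε₂ * ε₃) s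
      = (deriv k₁ s * k₂ s + k₁ s * deriv k₂ s) * ε₂ * ε₃ :=
    (((((hk₁d s).hasDerivAt.mul (hk₂d s).hasDerivAt)).mul_const ε₂).mul_const ε₃).deriv
  simp only [Pi.add_apply, d1, d2, d3, hT, hN, hB]
  have hε₂2 : ε₂ * ε₂ = 1 := by rcases hε₂ with h | h <;> rw [h] <;> ring
  rcases hε₂ with h | h <;> subst h <;> push_cast <;> module
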